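/- Suppose (T, ⊑) is finite with least element ⊥ and any two elements of T having a common upper bound are comparable. Then the program Π is inconsistent if and only if there exist i ∈ ℕ and a literal ℓ such that the iterates T_Π↑0, …, T_Π↑i are all defined and annoSet(Π, T_Π↑i, ℓ) contains two elements μ, μ' with μ ⋢ μ' and μ' ⋢ μ (i.e., two incomparable annotations). -/

import Mathlib

/-!
A model `M` bounds every defined iterate `T_Π↑k` (induction on `k`, since `M ℓ` is an upper bound
of `annoSet Π I ℓ` whenever `I ≤ M`), so two annotations of `annoSet Π (T_Π↑i) ℓ` lie below `M ℓ`
and are comparable by hypothesis. Conversely, if no incomparable pair ever appears, every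
`annoSet` is a finite chain, so it has a supremum and the iteration is defined forever. The
iterates increase in the finite poset of interpretations, hence reach a fixpoint, and a fixpoint
of `T_Π` is a model.
-/

/-- A ground GAP rule: a head literal (element of `A × Bool`) with a head
annotation in `T`, together with a finite set of body pairs of literals
with annotations. -/
structure GAPRule (A T : Type*) where
  head : A × Bool
  headAnn : T
  body : Set ((A × Bool) × T)
  body_finite : body.Finite

/-- An interpretation `I` satisfies the annotated literal `ℓ:μ` iff `μ ⊑ I ℓ`. -/
def satLit {A T : Type*} [PartialOrder T] (I : A × Bool → T) (ℓ : A × Bool) (μ : T) : Prop :=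
  μ ≤ I ℓ

/-- An interpretation satisfies a rule iff it satisfies the head annotated
literal or fails to satisfy some body annotated literal. -/
def satRule {A T : Type*} [PartialOrder T] (I : A × Bool → T) (r : GAPRule A T) : Prop :=
  satLit I r.head r.headAnn ∨ ∃ p ∈ r.body, ¬ satLit I p.1 p.2

/-- `I` is a model of a program `P` iff it satisfies every rule of `P`. -/
def isModel {A T : Type*} [PartialOrder T] (I : A × Bool → T) (P : Set (GAPRule A T)) : Prop :=
  ∀ r ∈ P, satRule I r

/-- `annoSet P I ℓ = {I ℓ} ∪ {μ₀ : some rule of P has head ℓ:μ₀ and I satisfies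
every body annotated literal of that rule}`. -/
def annoSet {A T : Type*} [PartialOrder T] (P : Set (GAPRule A T)) (I : A × Bool → T)
    (ℓ : A × Bool) : Set T :=
  {I ℓ} ∪ {μ | ∃ r ∈ P, r.head = ℓ ∧ r.headAnn = μ ∧ ∀ p ∈ r.body, satLit I p.1 p.2}

theorem IsChain.exists_isLUB_of_finite {α : Type*} [PartialOrder α] {s : Set α}
    (hc : IsChain (· ≤ ·) s) (hfin : s.Finite) (hne : s.Nonempty) : ∃ a, IsLUB s a := by
  obtain ⟨a, has, hmax⟩ := hfin.exists_maximal hne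
  refine ⟨a, fun b hb => ?_, fun c hc => hc has⟩
  rcases hc.total hb has with h | h
  exacts [h, hmax hb h]

section GAP

variable {A T : Type*} [PartialOrder T] {P : Set (GAPRule A T)}

theorem self_mem_annoSet (I : A × Bool → T) (ℓ : A × Bool) : I ℓ ∈ annoSet P I ℓ :=
  Or.inl rfl

theorem mem_upperBounds_annoSet {I M : A × Bool → T} (hIM : I ≤ M) (hM : isModel M P)
    (ℓ : A × Bool) : M ℓ ∈ upperBounds (annoSet P I ℓ) := by
  rintro μ (rfl | ⟨r, hr, rfl, rfl, hbody⟩)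
  · exact hIM _
  · rcases hM r hr with hhead | ⟨p, hp, hunsat⟩
    · exact hhead
    · exact absurd ((hbody p hp).trans (hIM p.1)) hunsat

theorem isModel_of_forall_mem_upperBounds_annoSet {I : A × Bool → T}
    (h : ∀ ℓ, I ℓ ∈ upperBounds (annoSet P I ℓ)) : isModel I P := by
  intro r hr
  by_cases hbody : ∀ p ∈ r.body, satLit I p.1 p.2
  · exact Or.inl (h r.head (Or.inr ⟨r, hr, rfl, rfl, hbody⟩))
  · obtain ⟨p, hp, hunsat⟩ := not_forall₂.mp hbody
    exact Or.inr ⟨p, hp, hunsat⟩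

theorem le_of_isLUB_annoSet_of_isModel [OrderBot T] {seq : ℕ → A × Bool → T} {i : ℕ}
    (h0 : seq 0 = fun _ => ⊥)
    (hlub : ∀ k < i, ∀ ℓ, IsLUB (annoSet P (seq k) ℓ) (seq (k + 1) ℓ))
    {M : A × Bool → T} (hM : isModel M P) : ∀ k ≤ i, seq k ≤ M := by
  intro k hk
  induction k with
  | zero => exact h0 ▸ fun _ => bot_le
  | succ k ih =>
    exact fun ℓ => (hlub k hk ℓ).2 (mem_upperBounds_annoSet (ih (by omega)) hM ℓ)

theorem exists_isModel_of_isLUB_annoSet [Finite A] [Finite T] {seq : ℕ → A × Bool → T}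
    (hlub : ∀ k ℓ, IsLUB (annoSet P (seq k) ℓ) (seq (k + 1) ℓ)) : ∃ M, isModel M P := by
  have hmono : Monotone seq :=
    monotone_nat_of_le_succ fun k ℓ => (hlub k ℓ).1 (self_mem_annoSet _ ℓ)
  obtain ⟨n, hn⟩ := WellFoundedGT.monotone_chain_condition ⟨seq, hmono⟩
  have hfix : seq (n + 1) = seq n := (hn (n + 1) n.le_succ).symm
  refine ⟨seq n, isModel_of_forall_mem_upperBounds_annoSet fun ℓ => ?_⟩
  simpa only [hfix] using (hlub n ℓ).1

/-- The step `T_Π`, extended by `T_Π(I)(ℓ) = I ℓ` where the supremum does not exist. -/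
noncomputable def tpStep (P : Set (GAPRule A T)) (I : A × Bool → T) : A × Bool → T := by
  classical
  exact fun ℓ => if h : ∃ m, IsLUB (annoSet P I ℓ) m then h.choose else I ℓ

theorem isLUB_tpStep {I : A × Bool → T} {ℓ : A × Bool} (h : ∃ m, IsLUB (annoSet P I ℓ) m) :
    IsLUB (annoSet P I ℓ) (tpStep P I ℓ) := by
  simpa only [tpStep, dif_pos h] using h.choose_spec

variable [OrderBot T]

noncomputable def tpIter (P : Set (GAPRule A T)) (n : ℕ) : A × Bool → T :=
  (tpStep P)^[n] ⊥

theorem tpIter_zero : tpIter P 0 = fun _ => ⊥ := rfl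

theorem tpIter_succ (n : ℕ) : tpIter P (n + 1) = tpStep P (tpIter P n) :=
  Function.iterate_succ_apply' _ _ _

theorem isLUB_annoSet_tpIter [Finite T]
    (hchain : ∀ i, (∀ k < i, ∀ ℓ, IsLUB (annoSet P (tpIter P k) ℓ) (tpIter P (k + 1) ℓ)) →
      ∀ ℓ, IsChain (· ≤ ·) (annoSet P (tpIter P i) ℓ))
    (i : ℕ) (ℓ : A × Bool) : IsLUB (annoSet P (tpIter P i) ℓ) (tpIter P (i + 1) ℓ) := by
  induction i using Nat.strong_induction_on generalizing ℓ with
  | _ i ih =>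
    rw [tpIter_succ]
    exact isLUB_tpStep ((hchain i ih) ℓ |>.exists_isLUB_of_finite
      (Set.toFinite _) ⟨_, self_mem_annoSet _ ℓ⟩)

end GAP

theorem inconsistent_iff_incomparable_annotations_general {A T : Type*} [Fintype A]
    [PartialOrder T] [Fintype T] [OrderBot T]
    (hcomp : ∀ a b : T, (∃ c : T, a ≤ c ∧ b ≤ c) → a ≤ b ∨ b ≤ a)
    (P : Set (GAPRule A T)) :
    (¬ ∃ M : A × Bool → T, isModel M P) ↔
      ∃ (i : ℕ) (seq : ℕ → (A × Bool → T)),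
        seq 0 = (fun _ : A × Bool => (⊥ : T)) ∧
        (∀ k : ℕ, k < i → ∀ ℓ : A × Bool, IsLUB (annoSet P (seq k) ℓ) (seq (k + 1) ℓ)) ∧
        ∃ (ℓ : A × Bool) (μ μ' : T),
          μ ∈ annoSet P (seq i) ℓ ∧ μ' ∈ annoSet P (seq i) ℓ ∧ ¬ μ ≤ μ' ∧ ¬ μ' ≤ μ := by
  constructor
  · intro hincons
    by_contra hno_witness
    refine hincons (exists_isModel_of_isLUB_annoSet (isLUB_annoSet_tpIter fun i hi ℓ => ?_))
    intro μ hμ μ' hμ' _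
    by_contra! hinc
    exact hno_witness ⟨i, tpIter P, tpIter_zero, hi, ℓ, μ, μ', hμ, hμ', hinc.1, hinc.2⟩
  · rintro ⟨i, seq, h0, hlub, ℓ, μ, μ', hμ, hμ', hμμ', hμ'μ⟩ ⟨M, hM⟩
    have hbound :=
      mem_upperBounds_annoSet (le_of_isLUB_annoSet_of_isModel h0 hlub hM i le_rfl) hM ℓ
    rcases hcomp μ μ' ⟨M ℓ, hbound hμ, hbound hμ'⟩ with h | h
    exacts [hμμ' h, hμ'μ h]

/-- Suppose `T` is finite with least element `⊥` and any two
elements of `T` with a common upper bound are comparable.  Then the program `P`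
is inconsistent iff there exist `i ∈ ℕ` and a literal `ℓ` such that the
iterates `T_Π↑0, …, T_Π↑i` are all defined and `annoSet P (T_Π↑i) ℓ` contains
two incomparable annotations `μ, μ'`. -/
theorem inconsistent_iff_incomparable_annotations {A T : Type*} [Fintype A] [Nonempty A]
    [PartialOrder T] [Fintype T] [OrderBot T]
    (hcomp : ∀ a b : T, (∃ c : T, a ≤ c ∧ b ≤ c) → a ≤ b ∨ b ≤ a)
    (P : Set (GAPRule A T)) (hfin : P.Finite) :
    (¬ ∃ M : A × Bool → T, isModel M P) ↔
      ∃ (i : ℕ) (seq : ℕ → (A × Bool → T)),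
        seq 0 = (fun _ : A × Bool => (⊥ : T)) ∧
        (∀ k : ℕ, k < i → ∀ ℓ : A × Bool, IsLUB (annoSet P (seq k) ℓ) (seq (k + 1) ℓ)) ∧
        ∃ (ℓ : A × Bool) (μ μ' : T),
          μ ∈ annoSet P (seq i) ℓ ∧ μ' ∈ annoSet P (seq i) ℓ ∧ ¬ μ ≤ μ' ∧ ¬ μ' ≤ μ :=
  inconsistent_iff_incomparable_annotations_general hcomp P
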